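/- For every k ∈ ℕ and every vertex v of G such that B_{2k+1}(v, G) is a tree (i.e., connected and without cycles), the maximum-weight-matching increment satisfies h(v, B_{2k}(v, G)) ≤ M(G) − M(G − v) ≤ h(v, B_{2k+1}(v, G)), where B_{2k}(v,G) and B_{2k+1}(v,G) are regarded as trees rooted at v. -/

import Mathlib

set_option linter.unusedSectionVars false
set_option linter.unusedVariables false
set_option linter.unnecessarySimpa false
set_option maxHeartbeats 1000000

open MeasureTheory Real
noncomputable section
open Classical

/-- `f` is a path of length `ℓ` for the adjacency relation `A`: `ℓ+1` pairwise
distinct vertices, consecutive ones joined by an edge. -/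
def IsPathOn {V : Type} (A : V → V → Prop) (ℓ : ℕ) (f : Fin (ℓ + 1) → V) : Prop :=
  Function.Injective f ∧ ∀ i : Fin ℓ, A (f i.castSucc) (f i.succ)

/-- the unordered pair `{a,b}` is an edge lying on a path of length at most `ℓ`
starting at `v`. -/
def edgeInBall {V : Type} (A : V → V → Prop) (ℓ : ℕ) (v a b : V) : Prop :=
  ∃ k, k ≤ ℓ ∧ ∃ f : Fin (k + 1) → V, IsPathOn A k f ∧ f 0 = v ∧
    ∃ i : Fin k, (f i.castSucc = a ∧ f i.succ = b) ∨ (f i.castSucc = b ∧ f i.succ = a)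

/-- the neighbourhood `B_ℓ(v,G)`: the subgraph of `G` formed by all vertices and
edges lying on paths of length at most `ℓ` starting at `v`. -/
def ballGraph {V : Type} (G : SimpleGraph V) (ℓ : ℕ) (v : V) : SimpleGraph V :=
  SimpleGraph.fromRel (fun a b => edgeInBall G.Adj ℓ v a b)

/-- the graph `G − v`, obtained by deleting the vertex `v` and all incident edges. -/
def deleteVert {V : Type} (G : SimpleGraph V) (v : V) : SimpleGraph V :=
  SimpleGraph.fromRel (fun a b => G.Adj a b ∧ a ≠ v ∧ b ≠ v)

/-- a relation contains a cycle. -/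
def HasCycle {V : Type} (A : V → V → Prop) : Prop :=
  ∃ m : ℕ, ∃ f : Fin (m + 3) → V, Function.Injective f ∧ ∀ i, A (f i) (f (i + 1))

/-- `M(G)`: the maximum total weight of a matching of `G` (a set of pairwise
vertex-disjoint edges). -/
def matchingValue {V : Type} [Fintype V] [DecidableEq V]
    (G : SimpleGraph V) (w : Sym2 V → ℝ) : ℝ :=
  sSup {r : ℝ | ∃ M : Finset (Sym2 V), ↑M ⊆ G.edgeSet ∧
    (∀ e ∈ M, ∀ e' ∈ M, e ≠ e' → ∀ x : V, x ∈ e → x ∉ e') ∧ r = ∑ e ∈ M, w e}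

/-- the recursively defined increment `h(u,T)` of a rooted weighted tree, computed
with an explicit recursion depth (`fuel`) and the parent of the current vertex:
`h(u,T) = max {0, max over children u' of u of (w_{{u,u'}} − h(u',T))}`. -/
def hRec {V : Type} [Fintype V] [DecidableEq V] (A : V → V → Prop) (w : Sym2 V → ℝ) :
    ℕ → Option V → V → ℝ
  | 0, _, _ => 0
  | fuel + 1, par, u =>
      Finset.fold max 0 (fun u' => w s(u, u') - hRec A w fuel (some u) u')
        (Finset.univ.filter fun u' => A u u' ∧ some u' ≠ par)
section Basics
variable {V : Type} [Fintype V] [DecidableEq V]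

lemma deleteVert_adj (G : SimpleGraph V) (u a b : V) :
    (deleteVert G u).Adj a b ↔ G.Adj a b ∧ a ≠ u ∧ b ≠ u := by
  simp only [deleteVert, SimpleGraph.fromRel_adj]
  constructor
  · rintro ⟨hne, h | h⟩
    · exact h
    · exact ⟨h.1.symm, h.2.2, h.2.1⟩
  · rintro ⟨h, h1, h2⟩
    exact ⟨h.ne, Or.inl ⟨h, h1, h2⟩⟩

lemma deleteVert_le (G : SimpleGraph V) (u : V) : deleteVert G u ≤ G := by
  intro a b h
  exact ((deleteVert_adj G u a b).1 h).1

lemma mem_edgeSet_deleteVert (G : SimpleGraph V) (u : V) (e : Sym2 V) :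
    e ∈ (deleteVert G u).edgeSet ↔ e ∈ G.edgeSet ∧ u ∉ e := by
  induction e using Sym2.ind with
  | _ a b =>
    simp only [SimpleGraph.mem_edgeSet, deleteVert_adj, Sym2.mem_iff]
    constructor
    · rintro ⟨h, h1, h2⟩
      refine ⟨h, ?_⟩
      rintro (rfl | rfl)
      · exact h1 rfl
      · exact h2 rfl
    · rintro ⟨h, h2⟩
      exact ⟨h, fun hh => h2 (Or.inl hh.symm), fun hh => h2 (Or.inr hh.symm)⟩

/-- A matching predicate matching the one inside `matchingValue`. -/
def IsMatch {V : Type} [Fintype V] [DecidableEq V] (G : SimpleGraph V)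
    (M : Finset (Sym2 V)) : Prop :=
  ↑M ⊆ G.edgeSet ∧ (∀ e ∈ M, ∀ e' ∈ M, e ≠ e' → ∀ x : V, x ∈ e → x ∉ e')

lemma matchingValue_eq_sSup (G : SimpleGraph V) (w : Sym2 V → ℝ) :
    matchingValue G w = sSup {r : ℝ | ∃ M : Finset (Sym2 V), IsMatch G M ∧ r = ∑ e ∈ M, w e} := by
  simp only [matchingValue, IsMatch, and_assoc]

lemma matchSet_finite (G : SimpleGraph V) (w : Sym2 V → ℝ) :
    Set.Finite {r : ℝ | ∃ M : Finset (Sym2 V), IsMatch G M ∧ r = ∑ e ∈ M, w e} := by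
  have : {r : ℝ | ∃ M : Finset (Sym2 V), IsMatch G M ∧ r = ∑ e ∈ M, w e}
      ⊆ (fun M : Finset (Sym2 V) => ∑ e ∈ M, w e) '' Set.univ := by
    rintro r ⟨M, _, rfl⟩
    exact ⟨M, Set.mem_univ _, rfl⟩
  exact ((Set.finite_univ).image _).subset this

lemma matchSet_nonempty (G : SimpleGraph V) (w : Sym2 V → ℝ) :
    Set.Nonempty {r : ℝ | ∃ M : Finset (Sym2 V), IsMatch G M ∧ r = ∑ e ∈ M, w e} := by
  refine ⟨0, ∅, ⟨?_, ?_⟩, by simp⟩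
  · simp
  · simp

lemma le_matchingValue (G : SimpleGraph V) (w : Sym2 V → ℝ) {M : Finset (Sym2 V)}
    (hM : IsMatch G M) : ∑ e ∈ M, w e ≤ matchingValue G w := by
  rw [matchingValue_eq_sSup]
  exact le_csSup (matchSet_finite G w).bddAbove ⟨M, hM, rfl⟩

lemma exists_optimal_matching (G : SimpleGraph V) (w : Sym2 V → ℝ) :
    ∃ M : Finset (Sym2 V), IsMatch G M ∧ matchingValue G w = ∑ e ∈ M, w e := by
  have := (matchSet_nonempty G w).csSup_mem (matchSet_finite G w)
  rw [matchingValue_eq_sSup]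
  exact this

lemma matchingValue_nonneg (G : SimpleGraph V) (w : Sym2 V → ℝ) : 0 ≤ matchingValue G w := by
  have : (0:ℝ) = ∑ e ∈ (∅ : Finset (Sym2 V)), w e := by simp
  rw [this]
  exact le_matchingValue G w ⟨by simp, by simp⟩

lemma matchingValue_mono {G G' : SimpleGraph V} (h : G ≤ G') (w : Sym2 V → ℝ) :
    matchingValue G w ≤ matchingValue G' w := by
  obtain ⟨M, hM, hval⟩ := exists_optimal_matching G w
  rw [hval]
  refine le_matchingValue G' w ⟨?_, hM.2⟩
  exact hM.1.trans (SimpleGraph.edgeSet_mono h)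

end Basics
section Recursion
variable {V : Type} [Fintype V] [DecidableEq V]

/-- adding an edge `{u,u'}` to a matching of `G - u - u'`. -/
lemma matchingValue_ge_edge (G : SimpleGraph V) (w : Sym2 V → ℝ) {u u' : V}
    (h : G.Adj u u') :
    w s(u, u') + matchingValue (deleteVert (deleteVert G u) u') w ≤ matchingValue G w := by
  obtain ⟨M, hM, hval⟩ := exists_optimal_matching (deleteVert (deleteVert G u) u') w
  rw [hval]
  have hnotmem : s(u, u') ∉ M := by
    intro hmem
    have := hM.1 hmem
    rw [mem_edgeSet_deleteVert, mem_edgeSet_deleteVert] at this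
    exact this.1.2 (by simp)
  have hedge : ∀ e ∈ M, u ∉ e ∧ u' ∉ e := by
    intro e he
    have := hM.1 he
    rw [mem_edgeSet_deleteVert, mem_edgeSet_deleteVert] at this
    exact ⟨this.1.2, this.2⟩
  have hmatch : IsMatch G (insert s(u, u') M) := by
    constructor
    · intro e he
      rcases Finset.mem_insert.1 (by exact_mod_cast he) with rfl | he'
      · exact h
      · have := hM.1 he'
        rw [mem_edgeSet_deleteVert, mem_edgeSet_deleteVert] at this
        exact this.1.1
    · intro e he e' he' hne x hx
      rcases Finset.mem_insert.1 he with rfl | he2 <;>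
        rcases Finset.mem_insert.1 he' with rfl | he2'
      · exact absurd rfl hne
      · -- x ∈ s(u,u'), e' ∈ M
        rcases Sym2.mem_iff.1 hx with rfl | rfl
        · exact (hedge e' he2').1
        · exact (hedge e' he2').2
      · -- e ∈ M, x ∈ e, e' = s(u,u')
        intro hx'
        rcases Sym2.mem_iff.1 hx' with rfl | rfl
        · exact (hedge e he2).1 hx
        · exact (hedge e he2).2 hx
      · exact hM.2 e he2 e' he2' hne x hx
  have := le_matchingValue G w hmatch
  rwa [Finset.sum_insert hnotmem] at this

/-- Decomposing an optimal matching of `G` at a vertex `u`. -/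
lemma matchingValue_le_cases (G : SimpleGraph V) (w : Sym2 V → ℝ) (u : V) :
    matchingValue G w ≤ matchingValue (deleteVert G u) w ∨
    ∃ u', G.Adj u u' ∧
      matchingValue G w ≤ w s(u, u') + matchingValue (deleteVert (deleteVert G u) u') w := by
  obtain ⟨M, hM, hval⟩ := exists_optimal_matching G w
  by_cases hc : ∃ e ∈ M, u ∈ e
  · right
    obtain ⟨e, heM, hue⟩ := hc
    obtain ⟨u', rfl⟩ := (Sym2.mem_iff_exists).1 hue
    have hadj : G.Adj u u' := (SimpleGraph.mem_edgeSet G).1 (hM.1 heM)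
    refine ⟨u', hadj, ?_⟩
    have hM' : IsMatch (deleteVert (deleteVert G u) u') (M.erase s(u, u')) := by
      constructor
      · intro e' he'
        have he'M : e' ∈ M := Finset.mem_of_mem_erase (by exact_mod_cast he')
        have hne : e' ≠ s(u, u') := Finset.ne_of_mem_erase (by exact_mod_cast he')
        rw [mem_edgeSet_deleteVert, mem_edgeSet_deleteVert]
        refine ⟨⟨hM.1 he'M, ?_⟩, ?_⟩
        · exact hM.2 _ heM _ he'M hne.symm u (by simp)
        · exact hM.2 _ heM _ he'M hne.symm u' (by simp)
      · intro e1 h1 e2 h2 hne x hx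
        exact hM.2 e1 (Finset.mem_of_mem_erase h1) e2 (Finset.mem_of_mem_erase h2) hne x hx
    have hsum : ∑ e' ∈ M, w e' = w s(u, u') + ∑ e' ∈ M.erase s(u, u'), w e' :=
      (Finset.add_sum_erase M w heM).symm
    rw [hval, hsum]
    exact add_le_add_right (le_matchingValue _ w hM') _
  · left
    push_neg at hc
    have hM' : IsMatch (deleteVert G u) M := by
      refine ⟨?_, hM.2⟩
      intro e he
      rw [mem_edgeSet_deleteVert]
      exact ⟨hM.1 he, hc e (by exact_mod_cast he)⟩
    rw [hval]
    exact le_matchingValue _ w hM'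

lemma matchingValue_del_le (G : SimpleGraph V) (w : Sym2 V → ℝ) (u : V) :
    matchingValue (deleteVert G u) w ≤ matchingValue G w :=
  matchingValue_mono (deleteVert_le G u) w

end Recursion

section Acyclic
variable {V : Type} [Fintype V] [DecidableEq V]
open SimpleGraph
lemma walk_support_getElem {G : SimpleGraph V} :
    ∀ {a b : V} (p : G.Walk a b) (i : ℕ) (h : i < p.support.length),
      p.support[i] = p.getVert i := by
  intro a b p
  induction p with
  | nil =>
      intro i h
      simp only [Walk.support_nil, List.length_singleton] at h
      have : i = 0 := by omega
      subst this
      simp [Walk.support_nil]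
  | cons hadj q ih =>
      intro i h
      cases i with
      | zero => simp [Walk.support_cons]
      | succ j =>
          simp only [Walk.support_cons, List.getElem_cons_succ, Walk.getVert_cons_succ]
          exact ih j (by simpa [Walk.support_cons] using h)

lemma isAcyclic_of_not_hasCycle {G : SimpleGraph V} (h : ¬ HasCycle G.Adj) :
    G.IsAcyclic := by
  intro a c hc
  apply h
  have h3 : 3 ≤ c.length := hc.three_le_length
  refine ⟨c.length - 3, fun i => c.getVert i, ?_, ?_⟩
  · -- injectivity
    intro i j hij
    simp only at hij
    have hi : (i : ℕ) < c.length := by omega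
    have hj : (j : ℕ) < c.length := by omega
    have hsl : c.support.length = c.length + 1 := Walk.length_support c
    have htail : c.support.tail.Nodup := hc.support_nodup
    have htl : c.support.tail.length = c.length := by
      rw [List.length_tail, hsl]; omega
    have hgt : ∀ m : ℕ, 1 ≤ m → (hm : m < c.length + 1) →
        c.getVert m = c.support.tail[m-1]'(by omega) := by
      intro m hm1 hm
      obtain ⟨m', rfl⟩ : ∃ m', m = m' + 1 := ⟨m - 1, by omega⟩
      simp only [Nat.add_sub_cancel]
      rw [List.getElem_tail, walk_support_getElem c (m' + 1) (by omega)]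
    have ha0 : c.getVert 0 = a := c.getVert_zero
    have han : c.getVert c.length = a := c.getVert_length
    rcases Nat.eq_zero_or_pos (i : ℕ) with hi0 | hip <;>
      rcases Nat.eq_zero_or_pos (j : ℕ) with hj0 | hjp
    · exact Fin.ext (by omega)
    · exfalso
      rw [hi0, ha0] at hij
      have hn := hgt c.length (by omega) (by omega)
      rw [han] at hn
      have h2 := hgt j hjp (by omega)
      rw [← hij] at h2
      have := (List.Nodup.getElem_inj_iff htail).1 (h2.symm.trans hn)
      omega
    · exfalso
      rw [hj0, ha0] at hij
      have hn := hgt c.length (by omega) (by omega)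
      rw [han] at hn
      have h2 := hgt i hip (by omega)
      rw [hij] at h2
      have := (List.Nodup.getElem_inj_iff htail).1 (h2.symm.trans hn)
      omega
    · have h1 := hgt i hip (by omega)
      have h2 := hgt j hjp (by omega)
      rw [h1, h2] at hij
      have := (List.Nodup.getElem_inj_iff htail).1 hij
      exact Fin.ext (by omega)
  · -- adjacency
    intro i
    simp only
    have hone : ((1 : Fin (c.length - 3 + 3)) : ℕ) = 1 := by
      have := Fin.val_one' (c.length - 3 + 2)
      simpa [show c.length - 3 + 2 + 1 = c.length - 3 + 3 from rfl] using this
    have hi : (i : ℕ) < c.length := by omega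
    have hadd : ((i + 1 : Fin (c.length - 3 + 3)) : ℕ)
        = ((i : ℕ) + 1) % (c.length - 3 + 3) := by
      rw [Fin.add_def, hone]
    by_cases hlast : (i : ℕ) = c.length - 1
    · have hv : ((i + 1 : Fin (c.length - 3 + 3)) : ℕ) = 0 := by
        rw [hadd, hlast, show c.length - 1 + 1 = c.length - 3 + 3 by omega, Nat.mod_self]
      rw [hv]
      have h1 : c.getVert ((i:ℕ)) = c.getVert (c.length - 1) := by rw [hlast]
      rw [h1, c.getVert_zero]
      have := c.adj_getVert_succ (i := c.length - 1) (by omega)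
      rw [show c.length - 1 + 1 = c.length by omega, c.getVert_length] at this
      exact this
    · have hv : ((i + 1 : Fin (c.length - 3 + 3)) : ℕ) = (i : ℕ) + 1 := by
        rw [hadd]
        exact Nat.mod_eq_of_lt (by omega)
      rw [hv]
      exact c.adj_getVert_succ (by omega)

/-- build a walk whose support is a given chain. -/
lemma walk_of_chain {G : SimpleGraph V} :
    ∀ (l : List V) (hne : l ≠ []) (h : l.Chain' G.Adj),
      ∃ p : G.Walk (l.head hne) (l.getLast hne), p.support = l := by
  intro l
  induction l with
  | nil => intro hne; exact absurd rfl hne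
  | cons a t ih =>
      intro hne h
      cases t with
      | nil => exact ⟨SimpleGraph.Walk.nil, rfl⟩
      | cons b t' =>
          have hadj : G.Adj a b := (List.isChain_cons_cons.1 h).1
          obtain ⟨p, hp⟩ := ih (by simp) (List.isChain_cons_cons.1 h).2
          have hlast : (b :: t').getLast (by simp) = (a :: b :: t').getLast (by simp) :=
            (List.getLast_cons (by simp)).symm
          refine ⟨(SimpleGraph.Walk.cons hadj p).copy rfl hlast, ?_⟩
          exact (SimpleGraph.Walk.support_copy _ _ _).trans (congrArg (a :: ·) hp)

/-- in an acyclic graph, a nodup chain between two vertices is unique. -/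
lemma chain_unique {G : SimpleGraph V} (hG : G.IsAcyclic) (l₁ l₂ : List V)
    (hne₁ : l₁ ≠ []) (hne₂ : l₂ ≠ [])
    (hc₁ : l₁.Chain' G.Adj) (hc₂ : l₂.Chain' G.Adj)
    (hn₁ : l₁.Nodup) (hn₂ : l₂.Nodup)
    (hh : l₁.head hne₁ = l₂.head hne₂) (hl : l₁.getLast hne₁ = l₂.getLast hne₂) :
    l₁ = l₂ := by
  obtain ⟨p₁, hp₁⟩ := walk_of_chain l₁ hne₁ hc₁
  obtain ⟨p₂, hp₂⟩ := walk_of_chain l₂ hne₂ hc₂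
  have hip₁ : p₁.IsPath := SimpleGraph.Walk.IsPath.mk' (by rwa [hp₁])
  have hip₂ : p₂.IsPath := SimpleGraph.Walk.IsPath.mk' (by rwa [hp₂])
  let q₂ := p₂.copy hh.symm hl.symm
  have hiq₂ : q₂.IsPath := by simpa [q₂] using hip₂
  have := SimpleGraph.isAcyclic_iff_path_unique.1 hG ⟨p₁, hip₁⟩ ⟨q₂, hiq₂⟩
  have hval : p₁ = q₂ := congrArg Subtype.val this
  have hsup : p₁.support = q₂.support := by rw [hval]
  rw [hp₁] at hsup
  rw [hsup]
  simp [q₂, hp₂]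



open List SimpleGraph
lemma getElem_congr_idx' {α : Type*} (l : List α) (i j : ℕ) (hij : i = j) {hi : i < l.length} :
    l[i]'hi = l[j]'(hij ▸ hi) := by subst hij; rfl

open List SimpleGraph

lemma ballGraph_adj_mono (G : SimpleGraph V) (v : V) {ℓ ℓ' : ℕ} (h : ℓ ≤ ℓ') {a b : V}
    (hab : (ballGraph G ℓ v).Adj a b) : (ballGraph G ℓ' v).Adj a b := by
  rw [ballGraph, fromRel_adj] at hab ⊢
  refine ⟨hab.1, ?_⟩
  rcases hab.2 with ⟨m, hm, rest⟩ | ⟨m, hm, rest⟩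
  · exact Or.inl ⟨m, hm.trans h, rest⟩
  · exact Or.inr ⟨m, hm.trans h, rest⟩

lemma ballGraph_le (G : SimpleGraph V) (ℓ : ℕ) (v : V) {a b : V}
    (hab : (ballGraph G ℓ v).Adj a b) : G.Adj a b := by
  rw [ballGraph, fromRel_adj] at hab
  rcases hab.2 with ⟨m, _, f, hf, _, i, hor⟩ | ⟨m, _, f, hf, _, i, hor⟩ <;>
    rcases hor with ⟨h1, h2⟩ | ⟨h1, h2⟩ <;>
    [skip; skip; skip; skip] <;>
    first
      | (rw [← h1, ← h2]; exact hf.2 i)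
      | (rw [← h1, ← h2]; exact (hf.2 i).symm)

lemma chain'_adj_reverse (H : SimpleGraph V) (l : List V) :
    List.Chain' H.Adj l.reverse ↔ List.Chain' H.Adj l := by
  unfold List.Chain'
  rw [List.isChain_reverse]
  constructor <;> exact fun h => h.imp fun a b hab => hab.symm

/-- each consecutive edge of a witness path is a ball edge. -/
lemma witness_edge_ball (G : SimpleGraph V) (ℓ : ℕ) (v : V) {m : ℕ} (hm : m ≤ ℓ)
    {f : Fin (m + 1) → V} (hf : IsPathOn G.Adj m f) (h0 : f 0 = v) (t : Fin m) :
    (ballGraph G ℓ v).Adj (f t.castSucc) (f t.succ) := by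
  rw [ballGraph, fromRel_adj]
  refine ⟨fun hc => ?_, Or.inl ⟨m, hm, f, hf, h0, t, Or.inl ⟨rfl, rfl⟩⟩⟩
  have := hf.1 hc
  exact absurd this (Fin.castSucc_lt_succ (i := t)).ne

/-- extension: a vertex adjacent (in `G`) to the end of a short ball-path is
ball-adjacent to it. -/
lemma ball_adj_extend (G : SimpleGraph V) (ℓ : ℕ) (v : V) {u u' : V} {anc : List V}
    (hch : List.Chain' (ballGraph G ℓ v).Adj (u :: anc))
    (hlast : (u :: anc).getLast (by simp) = v)
    (hnd : (u' :: u :: anc).Nodup)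
    (hadj : G.Adj u u')
    (hlen : (u :: anc).length ≤ ℓ) :
    (ballGraph G ℓ v).Adj u u' := by
  classical
  set d := anc.length with hd
  set l0 : List V := u' :: u :: anc with hl0
  have hl0len : l0.length = d + 2 := by simp [hl0, hd]
  set l : List V := l0.reverse with hl
  have hllen : l.length = d + 2 := by simp [hl, hl0len]
  have hcast : d + 1 + 1 = l.length := by omega
  -- chain in G on l0 and l
  have hchG : List.Chain' G.Adj l0 := by
    rw [hl0]; refine List.isChain_cons_cons.2 ?_
    exact ⟨hadj.symm, hch.imp fun a b hab => ballGraph_le G ℓ v hab⟩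
  have hchGl : List.Chain' G.Adj l := (chain'_adj_reverse G l0).2 hchG
  have hndl : l.Nodup := List.nodup_reverse.2 hnd
  set f : Fin (d + 1 + 1) → V := fun i => l.get (Fin.cast hcast i) with hf
  have hfval : ∀ (i : ℕ) (hi : i < d + 2), f ⟨i, by omega⟩ = l[i]'(by omega) := by
    intro i hi; rfl
  have hfl0 : ∀ (i : ℕ) (hi : i < d + 2), f ⟨i, by omega⟩ = l0[d + 1 - i]'(by omega) := by
    intro i hi
    rw [hfval i hi]
    have h1 : l[i]'(by omega) = l0[l0.length - 1 - i]'(by omega) :=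
      List.getElem_reverse ..
    rw [h1, getElem_congr_idx' l0 (l0.length - 1 - i) (d + 1 - i) (by omega)]
  have hpath : IsPathOn G.Adj (d + 1) f := by
    constructor
    · intro x y hxy
      exact Fin.cast_injective hcast ((List.nodup_iff_injective_get.1 hndl) hxy)
    · intro i
      have hchain := List.isChain_iff_getElem.1 hchGl (i : ℕ) (by omega)
      exact hchain
  have hgl : l0.getLast (by simp [hl0]) = v := by
    have h12 : (u' :: u :: anc).getLast (by simp) = (u :: anc).getLast (by simp) :=
      List.getLast_cons (by simp)
    exact h12.trans hlast
  have h0 : f 0 = v := by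
    have e0 : f 0 = l0[d + 1 - 0]'(by omega) := hfl0 0 (by omega)
    have e1 : l0.getLast (by simp [hl0]) = l0[l0.length - 1]'(by omega) :=
      List.getLast_eq_getElem _
    have e2 : l0[l0.length - 1]'(by omega) = l0[d + 1 - 0]'(by omega) :=
      getElem_congr_idx' _ _ _ (by omega)
    exact e0.trans (e2.symm.trans (e1.symm.trans hgl))
  have hedge : f (⟨d, by omega⟩ : Fin (d + 1)).castSucc = u ∧
      f (⟨d, by omega⟩ : Fin (d + 1)).succ = u' := by
    constructor
    · have e0 : f (⟨d, by omega⟩ : Fin (d+1)).castSucc = l0[d + 1 - d]'(by omega) :=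
        hfl0 d (by omega)
      have e2 : l0[d + 1 - d]'(by omega) = l0[1]'(by omega) :=
        getElem_congr_idx' _ _ _ (by omega)
      have e3 : l0[1]'(by omega) = u := by simp [hl0]
      exact e0.trans (e2.trans e3)
    · have e0 : f (⟨d, by omega⟩ : Fin (d+1)).succ = l0[d + 1 - (d+1)]'(by omega) :=
        hfl0 (d+1) (by omega)
      have e2 : l0[d + 1 - (d+1)]'(by omega) = l0[0]'(by omega) :=
        getElem_congr_idx' _ _ _ (by omega)
      have e3 : l0[0]'(by omega) = u' := by simp [hl0]
      exact e0.trans (e2.trans e3)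
  have hne : u ≠ u' := by
    have := (List.nodup_cons.1 hnd).1
    intro h; exact this (by simp [h])
  have hlen' : d + 1 ≤ ℓ := by simpa [hd] using hlen
  rw [ballGraph, fromRel_adj]
  exact ⟨hne, Or.inl ⟨d + 1, by omega, f, hpath, h0, ⟨d, by omega⟩, Or.inl hedge⟩⟩


end Acyclic

section Structure
variable {V : Type} [Fintype V] [DecidableEq V]
open List SimpleGraph

lemma ball_child_not_mem (G : SimpleGraph V) (v : V) {ℓ L : ℕ} (hℓL : ℓ ≤ L)
    (hac : (ballGraph G L v).IsAcyclic) {u u' : V} {anc : List V}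
    (hch : List.Chain' (ballGraph G ℓ v).Adj (u :: anc))
    (hnd : (u :: anc).Nodup)
    (hlast : (u :: anc).getLast (by simp) = v)
    (hadj : (ballGraph G ℓ v).Adj u u')
    (hpar : some u' ≠ anc.head?) :
    u' ∉ (u :: anc) := by
  intro hmem
  rcases List.mem_cons.1 hmem with rfl | hmem'
  · exact hadj.ne rfl
  obtain ⟨pre, suf, hanc⟩ := List.append_of_mem hmem'
  have hmono : ∀ a b, (ballGraph G ℓ v).Adj a b → (ballGraph G L v).Adj a b :=
    fun a b h => ballGraph_adj_mono G v hℓL h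
  have hchL : List.Chain' (ballGraph G L v).Adj (u :: anc) := hch.imp hmono
  have hndu : u ∉ anc := (List.nodup_cons.1 hnd).1
  have hnda : anc.Nodup := (List.nodup_cons.1 hnd).2
  -- second path u :: u' :: suf
  have hchsuf : List.Chain' (ballGraph G L v).Adj (u' :: suf) := by
    have := hchL.tail
    simp only [List.tail_cons] at this
    rw [hanc] at this
    exact (List.isChain_append.1 this).2.1
  have hch2 : List.Chain' (ballGraph G L v).Adj (u :: u' :: suf) :=
    List.isChain_cons_cons.2 ⟨hmono _ _ hadj, hchsuf⟩
  have hnd2 : (u :: u' :: suf).Nodup := by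
    rw [List.nodup_cons]
    constructor
    · intro hu
      exact hndu (by rw [hanc]; exact List.mem_append_right _ hu)
    · have : (u' :: suf).Nodup := by
        rw [hanc] at hnda
        exact hnda.of_append_right
      exact this
  have hlast2 : (u :: u' :: suf).getLast (by simp) = v := by
    have e1 : (u :: u' :: suf).getLast (by simp) = (u' :: suf).getLast (by simp) :=
      List.getLast_cons (by simp)
    have e2 : (pre ++ u' :: suf).getLast (by simp) = (u' :: suf).getLast (by simp) :=
      List.getLast_append_of_ne_nil _ (by simp)
    have e3 : (u :: anc).getLast (by simp) = anc.getLast (by rw [hanc]; simp) :=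
      List.getLast_cons (by rw [hanc]; simp)
    have e4 : anc.getLast (by rw [hanc]; simp) = (pre ++ u' :: suf).getLast (by simp) := by
      congr 1
    rw [e1, ← e2, ← e4, ← e3]
    exact hlast
  have heq := chain_unique hac (u :: anc) (u :: u' :: suf) (by simp) (by simp)
    hchL hch2 hnd hnd2 rfl (by rw [hlast, hlast2])
  have : anc = u' :: suf := by
    injection heq
  rw [this] at hpar
  simp at hpar

lemma ball_no_child_at_depth (G : SimpleGraph V) (v : V) {ℓ L : ℕ} (hℓL : ℓ ≤ L)
    (hac : (ballGraph G L v).IsAcyclic) {u u' : V} {anc : List V}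
    (hch : List.Chain' (ballGraph G ℓ v).Adj (u :: anc))
    (hnd : (u :: anc).Nodup)
    (hlast : (u :: anc).getLast (by simp) = v)
    (hadj : (ballGraph G ℓ v).Adj u u')
    (hpar : some u' ≠ anc.head?)
    (hlen : (u :: anc).length = ℓ + 1) : False := by
  have hmem : u' ∉ (u :: anc) := ball_child_not_mem G v hℓL hac hch hnd hlast hadj hpar
  have hmono : ∀ a b, (ballGraph G ℓ v).Adj a b → (ballGraph G L v).Adj a b :=
    fun a b h => ballGraph_adj_mono G v hℓL h
  -- the long path
  have hch1 : List.Chain' (ballGraph G L v).Adj (u' :: u :: anc) :=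
    List.isChain_cons_cons.2 ⟨hmono _ _ hadj.symm, hch.imp hmono⟩
  have hnd1 : (u' :: u :: anc).Nodup := List.nodup_cons.2 ⟨hmem, hnd⟩
  have hlast1 : (u' :: u :: anc).getLast (by simp) = v := by
    have e1 : (u' :: u :: anc).getLast (by simp) = (u :: anc).getLast (by simp) :=
      List.getLast_cons (by simp)
    rw [e1]; exact hlast
  -- witness for the ball edge
  have hadj' := hadj
  rw [ballGraph, fromRel_adj] at hadj'
  obtain ⟨hne, hw⟩ := hadj'
  -- extract a short path from v to u'
  have hshort : ∃ m : ℕ, m ≤ ℓ ∧ ∃ f : Fin (m + 1) → V, IsPathOn G.Adj m f ∧ f 0 = v ∧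
      ∃ j : Fin (m + 1), f j = u' := by
    rcases hw with ⟨m, hm, f, hf, h0, i, hor⟩ | ⟨m, hm, f, hf, h0, i, hor⟩ <;>
      rcases hor with ⟨h1, h2⟩ | ⟨h1, h2⟩
    · exact ⟨m, hm, f, hf, h0, i.succ, h2⟩
    · exact ⟨m, hm, f, hf, h0, i.castSucc, h1⟩
    · exact ⟨m, hm, f, hf, h0, i.castSucc, h1⟩
    · exact ⟨m, hm, f, hf, h0, i.succ, h2⟩
  obtain ⟨m, hm, f, hf, h0, j, hj⟩ := hshort
  -- competing list: reverse of the prefix of f up to j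
  set g : Fin ((j : ℕ) + 1) → V := fun t => f (Fin.castLE (by omega) t) with hg
  set P : List V := (List.ofFn g).reverse with hP
  have hPlen : P.length = (j : ℕ) + 1 := by simp [hP]
  have hPne : P ≠ [] := by
    intro h
    have := congrArg List.length h
    rw [hPlen] at this
    simp at this
  have hofnlen : (List.ofFn g).length = (j : ℕ) + 1 := by simp
  have hofn_elem : ∀ (t : ℕ) (ht : t < (j : ℕ) + 1),
      (List.ofFn g)[t]'(by simp; omega) = f ⟨t, by omega⟩ := by
    intro t ht
    simp only [List.getElem_ofFn]
    exact congrArg f (Fin.ext rfl)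
  have hP_elem : ∀ (t : ℕ) (ht : t < (j : ℕ) + 1),
      P[t]'(by rw [hPlen]; omega) = f ⟨(j : ℕ) - t, by omega⟩ := by
    intro t ht
    have e1 : P[t]'(by rw [hPlen]; omega)
        = (List.ofFn g)[(List.ofFn g).length - 1 - t]'(by simp) :=
      List.getElem_reverse ..
    rw [e1, getElem_congr_idx' (List.ofFn g) _ ((j : ℕ) - t) (by rw [hofnlen]; omega)]
    exact hofn_elem _ (by omega)
  -- chain' for P
  have hchofn : List.Chain' (ballGraph G L v).Adj (List.ofFn g) := by
    rw [List.Chain', List.isChain_iff_getElem]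
    intro t ht
    rw [hofnlen] at ht
    have hb : (ballGraph G ℓ v).Adj (f (⟨t, by omega⟩ : Fin m).castSucc)
        (f (⟨t, by omega⟩ : Fin m).succ) := witness_edge_ball G ℓ v hm hf h0 _
    have e1 : (List.ofFn g).get ⟨t, by rw [hofnlen]; omega⟩ = f ⟨t, by omega⟩ :=
      hofn_elem t (by omega)
    have e2 : (List.ofFn g).get ⟨t + 1, by rw [hofnlen]; omega⟩ = f ⟨t + 1, by omega⟩ :=
      hofn_elem (t + 1) (by omega)
    rw [hofn_elem t (by omega), hofn_elem (t + 1) (by omega)]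
    exact hmono _ _ hb
  have hchP : List.Chain' (ballGraph G L v).Adj P := by
    rw [hP, chain'_adj_reverse]
    exact hchofn
  have hndP : P.Nodup := by
    rw [hP, List.nodup_reverse, List.nodup_ofFn]
    intro x y hxy
    have := hf.1 hxy
    exact Fin.castLE_injective _ this
  have hheadP : P.head hPne = u' := by
    rw [List.head_eq_getElem_zero]
    have := hP_elem 0 (by omega)
    rw [this]
    rw [← hj]
    exact congrArg f (Fin.ext (by simp))
  have hlastP : P.getLast hPne = v := by
    rw [List.getLast_eq_getElem]
    have e0 := hP_elem ((j : ℕ)) (by omega)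
    rw [getElem_congr_idx' P _ ((j : ℕ)) (by rw [hPlen]; omega)]
    rw [e0, ← h0]
    exact congrArg f (Fin.ext (by simp))
  have heq := chain_unique hac (u' :: u :: anc) P (by simp) hPne
    hch1 hchP hnd1 hndP (by simp [hheadP]) (by rw [hlast1, hlastP])
  have hlen2 := congrArg List.length heq
  rw [hPlen] at hlen2
  simp only [List.length_cons] at hlen2
  have : (u :: anc).length = anc.length + 1 := by simp
  omega

end Structure

section Main
variable {V : Type} [Fintype V] [DecidableEq V]
open List SimpleGraph

def delList (G : SimpleGraph V) (l : List V) : SimpleGraph V :=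
  l.foldr (fun x H => deleteVert H x) G

lemma delList_adj (G : SimpleGraph V) :
    ∀ (l : List V) (a b : V), (delList G l).Adj a b ↔ G.Adj a b ∧ a ∉ l ∧ b ∉ l := by
  intro l
  induction l with
  | nil => intro a b; simp [delList]
  | cons x t ih =>
      intro a b
      have : delList G (x :: t) = deleteVert (delList G t) x := rfl
      rw [this, deleteVert_adj, ih]
      simp only [List.mem_cons]
      constructor
      · rintro ⟨⟨h, ha, hb⟩, hax, hbx⟩
        exact ⟨h, fun hc => hc.elim (fun e => hax e) ha, fun hc => hc.elim (fun e => hbx e) hb⟩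
      · rintro ⟨h, ha, hb⟩
        exact ⟨⟨h, fun hc => ha (Or.inr hc), fun hc => hb (Or.inr hc)⟩,
          fun hc => ha (Or.inl hc), fun hc => hb (Or.inl hc)⟩

lemma main_ind (G : SimpleGraph V) (w : Sym2 V → ℝ) (v : V) {ℓ L : ℕ} (hℓL : ℓ ≤ L)
    (hac : (ballGraph G L v).IsAcyclic) :
    ∀ (r : ℕ) (u : V) (anc : List V),
      List.Chain' (ballGraph G ℓ v).Adj (u :: anc) →
      (u :: anc).Nodup →
      (u :: anc).getLast (by simp) = v →
      (u :: anc).length + r = ℓ + 1 →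
      (Even r →
        hRec (ballGraph G ℓ v).Adj w (Fintype.card V + 1 - (u :: anc).length) anc.head? u
          ≤ matchingValue (delList G anc) w - matchingValue (deleteVert (delList G anc) u) w) ∧
      (¬ Even r →
        matchingValue (delList G anc) w - matchingValue (deleteVert (delList G anc) u) w
          ≤ hRec (ballGraph G ℓ v).Adj w (Fintype.card V + 1 - (u :: anc).length) anc.head? u) := by
  intro r
  induction r with
  | zero =>
      intro u anc hch hnd hlast hlen
      have hcard : (u :: anc).length ≤ Fintype.card V := List.Nodup.length_le_card hnd
      have hfuel : Fintype.card V + 1 - (u :: anc).length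
          = (Fintype.card V - (u :: anc).length) + 1 := by omega
      constructor
      · intro _
        rw [hfuel]
        simp only [hRec]
        rw [Finset.fold_max_le]
        refine ⟨sub_nonneg.2 (matchingValue_del_le _ w u), fun u' hu' => ?_⟩
        rw [Finset.mem_filter] at hu'
        exact (ball_no_child_at_depth G v hℓL hac hch hnd hlast
          hu'.2.1 hu'.2.2 (by omega)).elim
      · intro h
        exact absurd Even.zero h
  | succ r ih =>
      intro u anc hch hnd hlast hlen
      have hcard : (u :: anc).length ≤ Fintype.card V := List.Nodup.length_le_card hnd
      have hfuel : Fintype.card V + 1 - (u :: anc).length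
          = (Fintype.card V - (u :: anc).length) + 1 := by omega
      have hu_anc : u ∉ anc := (List.nodup_cons.1 hnd).1
      have hHadj : ∀ a b, (delList G anc).Adj a b ↔ G.Adj a b ∧ a ∉ anc ∧ b ∉ anc :=
        delList_adj G anc
      have hdel : delList G (u :: anc) = deleteVert (delList G anc) u := rfl
      have hfe : Fintype.card V + 1 - ((u :: anc).length + 1)
          = Fintype.card V - (u :: anc).length := by omega
      -- child context builder
      have hchild : ∀ u' : V, (ballGraph G ℓ v).Adj u u' → u' ∉ (u :: anc) →
          List.Chain' (ballGraph G ℓ v).Adj (u' :: u :: anc) ∧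
          (u' :: u :: anc).Nodup ∧ (u' :: u :: anc).getLast (by simp) = v ∧
          (u' :: u :: anc).length + r = ℓ + 1 := by
        intro u' hadj hmem
        refine ⟨List.isChain_cons_cons.2 ⟨hadj.symm, hch⟩, List.nodup_cons.2 ⟨hmem, hnd⟩, ?_, ?_⟩
        · have h12 : (u' :: u :: anc).getLast (by simp) = (u :: anc).getLast (by simp) :=
            List.getLast_cons (by simp)
          exact h12.trans hlast
        · simp only [List.length_cons] at hlen ⊢
          omega
      constructor
      · -- even r+1 : hRec ≤ D
        intro hev
        have hro : ¬ Even r := Nat.even_add_one.1 hev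
        rw [hfuel]
        simp only [hRec]
        rw [Finset.fold_max_le]
        refine ⟨sub_nonneg.2 (matchingValue_del_le _ w u), fun u' hu' => ?_⟩
        rw [Finset.mem_filter] at hu'
        obtain ⟨-, hadj, hpar⟩ := hu'
        have hmem : u' ∉ (u :: anc) := ball_child_not_mem G v hℓL hac hch hnd hlast hadj hpar
        obtain ⟨c1, c2, c3, c4⟩ := hchild u' hadj hmem
        have hIH := (ih u' (u :: anc) c1 c2 c3 c4).2 hro
        rw [show (u' :: u :: anc).length = (u :: anc).length + 1 from rfl, hfe, hdel] at hIH
        simp only [List.head?_cons] at hIH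
        -- hIH : MV (H-u) - MV ((H-u)-u') ≤ hRec child
        have hGadj : G.Adj u u' := ballGraph_le G ℓ v hadj
        have hHuu' : (delList G anc).Adj u u' :=
          (hHadj u u').2 ⟨hGadj, hu_anc, fun hm => hmem (List.mem_cons_of_mem _ hm)⟩
        have hedge := matchingValue_ge_edge (delList G anc) w hHuu'
        linarith
      · -- odd r+1 : D ≤ hRec
        intro hodd
        have hre : Even r := by
          rw [Nat.even_add_one, not_not] at hodd
          exact hodd
        rw [hfuel]
        simp only [hRec]
        rcases matchingValue_le_cases (delList G anc) w u with hle | ⟨u', hHuu', hle⟩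
        · have h0 : matchingValue (delList G anc) w
              - matchingValue (deleteVert (delList G anc) u) w ≤ 0 := by linarith
          apply le_trans h0
          rw [Finset.le_fold_max]
          exact Or.inl le_rfl
        · have hGadj : G.Adj u u' := ((hHadj u u').1 hHuu').1
          have hu'anc : u' ∉ anc := ((hHadj u u').1 hHuu').2.2
          have hmem : u' ∉ (u :: anc) := by
            simp only [List.mem_cons, not_or]
            exact ⟨hGadj.ne', hu'anc⟩
          have hpar : some u' ≠ anc.head? := by
            cases anc with
            | nil => simp
            | cons a t =>
                simp only [List.head?_cons, ne_eq, Option.some_inj]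
                intro h
                exact hu'anc (by rw [h]; exact List.mem_cons_self)
          have hballadj : (ballGraph G ℓ v).Adj u u' :=
            ball_adj_extend G ℓ v hch hlast (List.nodup_cons.2 ⟨hmem, hnd⟩) hGadj
              (by simp only [List.length_cons] at hlen ⊢; omega)
          obtain ⟨c1, c2, c3, c4⟩ := hchild u' hballadj hmem
          have hIH := (ih u' (u :: anc) c1 c2 c3 c4).1 hre
          rw [show (u' :: u :: anc).length = (u :: anc).length + 1 from rfl, hfe, hdel] at hIH
          simp only [List.head?_cons] at hIH
          have hmemF : u' ∈ Finset.univ.filter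
              (fun u'' => (ballGraph G ℓ v).Adj u u'' ∧ some u'' ≠ anc.head?) :=
            Finset.mem_filter.2 ⟨Finset.mem_univ _, hballadj, hpar⟩
          rw [Finset.le_fold_max]
          right
          refine ⟨u', hmemF, ?_⟩
          linarith

end Main

theorem stmt19 {V : Type} [Fintype V] [DecidableEq V]
    (G : SimpleGraph V) (w : Sym2 V → ℝ) (hw : ∀ e, 0 ≤ w e)
    (v : V) (k : ℕ)
    -- `B_{2k+1}(v,G)` is a tree (it is connected by construction, so this
    -- amounts to it containing no cycle)
    (htree : ¬ HasCycle (ballGraph G (2 * k + 1) v).Adj) :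
    hRec (ballGraph G (2 * k) v).Adj w (Fintype.card V) none v
        ≤ matchingValue G w - matchingValue (deleteVert G v) w ∧
      matchingValue G w - matchingValue (deleteVert G v) w
        ≤ hRec (ballGraph G (2 * k + 1) v).Adj w (Fintype.card V) none v := by
  have hac : (ballGraph G (2 * k + 1) v).IsAcyclic := isAcyclic_of_not_hasCycle htree
  constructor
  · have h := main_ind G w v (by omega : 2 * k ≤ 2 * k + 1) hac (2 * k) v []
      (by simp [List.Chain']) (by simp) (by simp) (by simp only [List.length_cons, List.length_nil]; omega)
    have h1 := h.1 ⟨k, by ring⟩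
    simp only [delList, List.foldr_nil, List.length_cons, List.length_nil, List.head?_nil,
      zero_add, Nat.add_sub_cancel] at h1
    exact h1
  · have h := main_ind G w v (le_refl (2 * k + 1)) hac (2 * k + 1) v []
      (by simp [List.Chain']) (by simp) (by simp) (by simp only [List.length_cons, List.length_nil]; omega)
    have h2 := h.2 (by simp [Nat.even_add_one, parity_simps])
    simp only [delList, List.foldr_nil, List.length_cons, List.length_nil, List.head?_nil,
      zero_add, Nat.add_sub_cancel] at h2
    exact h2
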